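/- arXiv:1501.06979 — 3 statements merged into one kernel-verified Lean document; each statement's English description precedes it below -/
import Mathlib

section
/- Let F : ℝ²₁ → ℝ²₁ be a causal automorphism of two-dimensional Minkowski spacetime. Then there exist unique homeomorphisms φ and ψ of ℝ, either both increasing or both decreasing, such that: if both are increasing, F(x,t) = ½(φ(x+t)+ψ(x−t), φ(x+t)−ψ(x−t)); if both are decreasing, F(x,t) = ½(φ(x−t)+ψ(x+t), φ(x−t)−ψ(x+t)). Conversely, for any such pair (φ, ψ) the map F defined by these formulas is a causal automorphism of ℝ²₁. -/
/-- The causal relation of two-dimensional Minkowski spacetime `ℝ²₁` (points `(x, t)`):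
`p ≤ q` iff `t₂ − t₁ ≥ |x₂ − x₁|`. -/
def MinkRel (p q : ℝ × ℝ) : Prop := |q.1 - p.1| ≤ q.2 - p.2

/-- `F` has the form prescribed by Theorem 2.2 of the paper, for the pair of homeomorphisms
`(φ, ψ)` of `ℝ`, which are either both increasing or both decreasing. -/
def MinkForm (φ ψ : ℝ ≃ₜ ℝ) (F : ℝ × ℝ → ℝ × ℝ) : Prop :=
  (StrictMono φ ∧ StrictMono ψ ∧
    ∀ x t : ℝ, F (x, t) = ((φ (x + t) + ψ (x - t)) / 2, (φ (x + t) - ψ (x - t)) / 2)) ∨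
  (StrictAnti φ ∧ StrictAnti ψ ∧
    ∀ x t : ℝ, F (x, t) = ((φ (x - t) + ψ (x + t)) / 2, (φ (x - t) - ψ (x + t)) / 2))

/-!
In the null coordinates `u = x + t`, `v = x - t` the causal relation reads `u ≤ u' ∧ v' ≤ v`, so
after reversing `v` a causal automorphism becomes an order automorphism of `ℝ × ℝ` with the product
order. An order automorphism preserves `⊔` and `⊓`; applied to the corners of an axis-parallel
rectangle this forces each of its coordinates to depend on only one coordinate of the argument.
Hence it is either a product map `(u, v) ↦ (f u, g v)` or such a map followed by the swap, which
gives the increasing and the decreasing case. The pair `(φ, ψ)` is unique because in both cases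
`F (s, 0) = ((φ s + ψ s) / 2, (φ s - ψ s) / 2)`.
-/

open Function

section ProductOrder

variable {α β γ δ : Type*}

theorem LatticeHom.rectangle_edges_eq [LinearOrder α] [LinearOrder β] [LinearOrder γ]
    (f : LatticeHom (α × β) γ) {a a' : α} {b b' : β} (ha : a' ≤ a) (hb : b ≤ b') :
    (f (a', b) = f (a, b) ∧ f (a', b') = f (a, b')) ∨
      (f (a, b) = f (a, b') ∧ f (a', b) = f (a', b')) := by
  have hsup : f (a, b') = f (a, b) ⊔ f (a', b') := by
    rw [← map_sup, Prod.mk_sup_mk, sup_eq_left.2 ha, sup_eq_right.2 hb]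
  have hinf : f (a', b) = f (a, b) ⊓ f (a', b') := by
    rw [← map_inf, Prod.mk_inf_mk, inf_eq_right.2 ha, inf_eq_left.2 hb]
  rcases le_total (f (a, b)) (f (a', b')) with h | h
  · exact .inl ⟨by rw [hinf, inf_eq_left.2 h], by rw [hsup, sup_eq_right.2 h]⟩
  · exact .inr ⟨by rw [hsup, sup_eq_left.2 h], by rw [hinf, inf_eq_right.2 h]⟩

theorem LatticeHom.factorsThrough_fst_or_snd [LinearOrder α] [LinearOrder β] [LinearOrder γ]
    (f : LatticeHom (α × β) γ) : FactorsThrough f Prod.fst ∨ FactorsThrough f Prod.snd := by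
  refine or_iff_not_imp_left.2 fun hfst => ?_
  obtain ⟨⟨a₀, b₀⟩, ⟨_, b₁⟩, rfl, hne⟩ : ∃ p q : α × β, p.1 = q.1 ∧ f p ≠ f q := by
    simpa [FactorsThrough] using hfst
  wlog hb : b₀ < b₁ generalizing b₀ b₁
  · exact this b₁ b₀ hne.symm <| (not_lt.1 hb).lt_of_ne fun h => hne (h ▸ rfl)
  have hrow₀ : ∀ a, f (a, b₀) = f (a₀, b₀) := by
    intro a
    rcases le_total a a₀ with h | h
    · rcases f.rectangle_edges_eq h hb.le with ⟨e, -⟩ | ⟨e, -⟩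
      exacts [e, absurd e hne]
    · rcases f.rectangle_edges_eq h hb.le with ⟨e, -⟩ | ⟨-, e⟩
      exacts [e.symm, absurd e hne]
  have hrow : ∀ {a a'} b, a' ≤ a → f (a', b) = f (a, b) := by
    intro a a' b h
    rcases le_total b b₀ with hb' | hb'
    · rcases f.rectangle_edges_eq h hb' with ⟨e, -⟩ | ⟨e₁, e₂⟩
      exacts [e, e₂.trans <| (hrow₀ a').trans <| (hrow₀ a).symm.trans e₁.symm]
    · rcases f.rectangle_edges_eq h hb' with ⟨-, e⟩ | ⟨e₁, e₂⟩
      exacts [e, e₂.symm.trans <| (hrow₀ a').trans <| (hrow₀ a).symm.trans e₁]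
  rintro ⟨a, b⟩ ⟨a', b'⟩ (rfl : b = b')
  rcases le_total a a' with h | h
  exacts [hrow b h, (hrow b h).symm]

theorem OrderIso.exists_eq_prodMap [PartialOrder α] [PartialOrder β] [Preorder γ] [Preorder δ]
    [Nonempty α] [Nonempty β] (e : α × β ≃o γ × δ)
    (h₁ : FactorsThrough (Prod.fst ∘ e) Prod.fst) (h₂ : FactorsThrough (Prod.snd ∘ e) Prod.snd) :
    ∃ (f : α ≃o γ) (g : β ≃o δ), ∀ a b, e (a, b) = (f a, g b) := by
  obtain ⟨a₀⟩ := ‹Nonempty α›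
  obtain ⟨b₀⟩ := ‹Nonempty β›
  let f a := (e (a, b₀)).1
  let g b := (e (a₀, b)).2
  have he : ⇑e = Prod.map f g := funext fun p => Prod.ext (h₁ rfl) (h₂ rfl)
  have hle a a' b b' : f a ≤ f a' ∧ g b ≤ g b' ↔ a ≤ a' ∧ b ≤ b' := by
    simpa [he] using e.le_iff_le (x := (a, b)) (y := (a', b'))
  have : Nonempty γ := ⟨f a₀⟩
  have : Nonempty δ := ⟨g b₀⟩
  obtain ⟨hf, hg⟩ := Prod.map_surjective.1 (he ▸ e.surjective)
  exact ⟨.ofSurjective (.ofMapLEIff f fun a a' => by simpa using hle a a' b₀ b₀) hf,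
    .ofSurjective (.ofMapLEIff g fun b b' => by simpa using hle a₀ a₀ b b') hg,
    fun a b => congrFun he (a, b)⟩

theorem OrderIso.exists_eq_prodMap_or_swap [LinearOrder α] [LinearOrder β] [LinearOrder γ]
    [LinearOrder δ] [Nontrivial α] [Nontrivial β] (e : α × β ≃o γ × δ) :
    (∃ (f : α ≃o γ) (g : β ≃o δ), ∀ a b, e (a, b) = (f a, g b)) ∨
      ∃ (f : α ≃o δ) (g : β ≃o γ), ∀ a b, e (a, b) = (g b, f a) := by
  rcases (LatticeHom.fst.comp (e : LatticeHom (α × β) (γ × δ))).factorsThrough_fst_or_snd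
    with h₁ | h₁ <;>
  rcases (LatticeHom.snd.comp (e : LatticeHom (α × β) (γ × δ))).factorsThrough_fst_or_snd
    with h₂ | h₂
  · obtain ⟨b, b', hb⟩ := exists_pair_ne β
    have hab : e (Classical.arbitrary α, b) = e (Classical.arbitrary α, b') :=
      Prod.ext (h₁ rfl) (h₂ rfl)
    exact absurd (congrArg Prod.snd (e.injective hab)) hb
  · exact .inl (e.exists_eq_prodMap h₁ h₂)
  · obtain ⟨f, g, h⟩ := (e.trans OrderIso.prodComm).exists_eq_prodMap h₂ h₁
    exact .inr ⟨f, g, fun a b => congrArg Prod.swap (h a b)⟩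
  · obtain ⟨a, a', ha⟩ := exists_pair_ne α
    have hab : e (a, Classical.arbitrary β) = e (a', Classical.arbitrary β) :=
      Prod.ext (h₁ rfl) (h₂ rfl)
    exact absurd (congrArg Prod.fst (e.injective hab)) ha

end ProductOrder

noncomputable def nullCoords : ℝ × ℝ ≃ ℝ × ℝ where
  toFun p := (p.1 + p.2, p.1 - p.2)
  invFun q := ((q.1 + q.2) / 2, (q.1 - q.2) / 2)
  left_inv p := by ext <;> simp
  right_inv q := by ext <;> simp <;> ring

theorem minkRel_iff_nullCoords (p q : ℝ × ℝ) :
    MinkRel p q ↔ (nullCoords p).1 ≤ (nullCoords q).1 ∧ (nullCoords q).2 ≤ (nullCoords p).2 := by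
  simp only [MinkRel, nullCoords, Equiv.coe_fn_mk, abs_sub_le_iff]
  constructor <;> rintro ⟨h₁, h₂⟩ <;> constructor <;> linarith

noncomputable def lightCone : ℝ × ℝ ≃ ℝ × ℝ :=
  nullCoords.trans ((Equiv.refl ℝ).prodCongr (Equiv.neg ℝ))

theorem minkRel_iff_lightCone_le (p q : ℝ × ℝ) : MinkRel p q ↔ lightCone p ≤ lightCone q := by
  simp [minkRel_iff_nullCoords, lightCone, Prod.le_def]

theorem exists_minkForm_of_causal (F : Equiv.Perm (ℝ × ℝ))
    (hF : ∀ p q, MinkRel p q ↔ MinkRel (F p) (F q)) : ∃ φ ψ : ℝ ≃ₜ ℝ, MinkForm φ ψ F := by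
  let G : ℝ × ℝ ≃o ℝ × ℝ :=
    { toEquiv := lightCone.symm.trans (F.trans lightCone)
      map_rel_iff' {p q} := by
        change lightCone (F _) ≤ lightCone (F _) ↔ _
        rw [← minkRel_iff_lightCone_le, ← hF, minkRel_iff_lightCone_le,
          Equiv.apply_symm_apply, Equiv.apply_symm_apply] }
  have hG x t : F (x, t) = lightCone.symm (G (x + t, -(x - t))) := by
    simp [G, lightCone, nullCoords]
  rcases G.exists_eq_prodMap_or_swap with ⟨f, g, h⟩ | ⟨f, g, h⟩
  · refine ⟨f.toHomeomorph, ((Homeomorph.neg ℝ).trans g.toHomeomorph).trans (Homeomorph.neg ℝ),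
      .inl ⟨f.strictMono, fun a b hab => neg_lt_neg (g.strictMono (neg_lt_neg hab)),
        fun x t => ?_⟩⟩
    rw [hG, h]
    rfl
  · refine ⟨(Homeomorph.neg ℝ).trans g.toHomeomorph, f.toHomeomorph.trans (Homeomorph.neg ℝ),
      .inr ⟨fun a b hab => g.strictMono (neg_lt_neg hab),
        fun a b hab => neg_lt_neg (f.strictMono hab), fun x t => ?_⟩⟩
    rw [hG, h]
    rfl

namespace MinkForm

variable {φ ψ : ℝ ≃ₜ ℝ} {F : ℝ × ℝ → ℝ × ℝ}

theorem nullCoords_eq (h : MinkForm φ ψ F) :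
    (StrictMono φ ∧ StrictMono ψ ∧ ∀ p, nullCoords (F p) = Prod.map φ ψ (nullCoords p)) ∨
      (StrictAnti φ ∧ StrictAnti ψ ∧ ∀ p, nullCoords (F p) = Prod.map φ ψ (nullCoords p).swap) := by
  rcases h with ⟨hφ, hψ, hF⟩ | ⟨hφ, hψ, hF⟩
  · refine .inl ⟨hφ, hψ, fun ⟨x, t⟩ => ?_⟩
    rw [hF]
    ext <;> simp only [nullCoords, Equiv.coe_fn_mk, Prod.map_apply] <;> ring
  · refine .inr ⟨hφ, hψ, fun ⟨x, t⟩ => ?_⟩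
    rw [hF]
    ext <;> simp only [nullCoords, Equiv.coe_fn_mk, Prod.swap_prod_mk, Prod.map_apply] <;> ring

theorem bijective (h : MinkForm φ ψ F) : Bijective F := by
  have hφψ := φ.bijective.prodMap ψ.bijective
  rcases h.nullCoords_eq with ⟨-, -, hF⟩ | ⟨-, -, hF⟩
  · have : F = nullCoords.symm ∘ Prod.map φ ψ ∘ nullCoords :=
      funext fun p => nullCoords.eq_symm_apply.2 (hF p)
    exact this ▸ nullCoords.symm.bijective.comp (hφψ.comp nullCoords.bijective)
  · have : F = nullCoords.symm ∘ Prod.map φ ψ ∘ Prod.swap ∘ nullCoords :=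
      funext fun p => nullCoords.eq_symm_apply.2 (hF p)
    exact this ▸ nullCoords.symm.bijective.comp
      (hφψ.comp (Prod.swap_bijective.comp nullCoords.bijective))

theorem minkRel_iff (h : MinkForm φ ψ F) (p q : ℝ × ℝ) :
    MinkRel (F p) (F q) ↔ MinkRel p q := by
  rw [minkRel_iff_nullCoords, minkRel_iff_nullCoords p]
  rcases h.nullCoords_eq with ⟨hφ, hψ, hF⟩ | ⟨hφ, hψ, hF⟩
  · simp [hF, hφ.le_iff_le, hψ.le_iff_le]
  · simp [hF, hφ.le_iff_ge, hψ.le_iff_ge, and_comm]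

theorem apply_zero (h : MinkForm φ ψ F) (s : ℝ) :
    F (s, 0) = ((φ s + ψ s) / 2, (φ s - ψ s) / 2) := by
  rcases h with ⟨-, -, hF⟩ | ⟨-, -, hF⟩ <;> simpa using hF s 0

theorem unique {φ' ψ' : ℝ ≃ₜ ℝ} (h : MinkForm φ ψ F) (h' : MinkForm φ' ψ' F) :
    φ = φ' ∧ ψ = ψ' := by
  have key s : φ s = φ' s ∧ ψ s = ψ' s := by
    have := (h.apply_zero s).symm.trans (h'.apply_zero s)
    simp only [Prod.mk.injEq] at this
    constructor <;> linarith [this.1, this.2]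
  exact ⟨Homeomorph.ext fun s => (key s).1, Homeomorph.ext fun s => (key s).2⟩

end MinkForm

/-- Every causal automorphism `F` of `ℝ²₁` is given by a unique pair of
homeomorphisms `φ, ψ` of `ℝ`, either both increasing or both decreasing, via
`F(x,t) = ½(φ(x+t)+ψ(x−t), φ(x+t)−ψ(x−t))` (increasing case) or
`F(x,t) = ½(φ(x−t)+ψ(x+t), φ(x−t)−ψ(x+t))` (decreasing case); and conversely any map of
this form is a causal automorphism of `ℝ²₁`. -/
theorem causal_automorphism_R2_characterization :
    (∀ F : Equiv.Perm (ℝ × ℝ), (∀ p q, MinkRel p q ↔ MinkRel (F p) (F q)) →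
      ∃! pr : (ℝ ≃ₜ ℝ) × (ℝ ≃ₜ ℝ), MinkForm pr.1 pr.2 F) ∧
    (∀ (φ ψ : ℝ ≃ₜ ℝ) (F : ℝ × ℝ → ℝ × ℝ), MinkForm φ ψ F →
      Function.Bijective F ∧ ∀ p q, MinkRel p q ↔ MinkRel (F p) (F q)) := by
  refine ⟨fun F hF => ?_, fun φ ψ F h => ⟨h.bijective, fun p q => (h.minkRel_iff p q).symm⟩⟩
  obtain ⟨φ, ψ, h⟩ := exists_minkForm_of_causal F hF
  refine ⟨(φ, ψ), h, fun pr hpr => ?_⟩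
  obtain ⟨h₁, h₂⟩ := hpr.unique h
  exact Prod.ext h₁ h₂
end

section
/- Let F : (x,t) ↦ (X(x,t), T(x,t)) be a C^∞ conformal diffeomorphism from a globally hyperbolic open subset U of ℝ²₁ containing the x-axis as a Cauchy surface into an open subset of ℝ²₁ containing the x-axis. Then there exist unique C^∞ diffeomorphisms φ, ψ of ℝ with φ′ψ′ > 0 everywhere such that either F(x,t) = (φ(x+t)+ψ(x−t), φ(x+t)−ψ(x−t)) or F(x,t) = (φ(x−t)+ψ(x+t), φ(x−t)−ψ(x+t)). -/
/-- The causal relation of an open subspacetime `U ⊆ ℝ²₁`: there is a future-directed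
causal curve from `p` to `q` staying inside `U` (causal curves in `ℝ²₁` are graphs
`t ↦ (c t, t)` of `1`-Lipschitz functions). -/
def RelIn (U : Set (ℝ × ℝ)) (p q : ℝ × ℝ) : Prop :=
  p ∈ U ∧ q ∈ U ∧ p.2 ≤ q.2 ∧ ∃ c : ℝ → ℝ, LipschitzWith 1 c ∧
    c p.2 = p.1 ∧ c q.2 = q.1 ∧ ∀ t ∈ Set.Icc p.2 q.2, (c t, t) ∈ U

/-- `U ⊆ ℝ²₁` is a (two-dimensional) globally hyperbolic spacetime having the `x`-axis as
a (non-compact) Cauchy surface: `U` is open, contains the axis, and every inextendible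
causal curve in `U` (an inclusion-maximal `1`-Lipschitz graph `{(c t, t) | t ∈ Idom} ⊆ U`)
meets the axis, i.e. is defined at `t = 0`. -/
def IsGHCauchyAxis (U : Set (ℝ × ℝ)) : Prop :=
  IsOpen U ∧ (∀ x : ℝ, (x, (0 : ℝ)) ∈ U) ∧
  ∀ (Idom : Set ℝ) (c : ℝ → ℝ), Idom.Nonempty → IsPreconnected Idom → LipschitzWith 1 c →
    (∀ t ∈ Idom, (c t, t) ∈ U) →
    (∀ (J : Set ℝ) (d : ℝ → ℝ), IsPreconnected J → LipschitzWith 1 d → Idom ⊆ J →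
      (∀ t ∈ J, (d t, t) ∈ U) → (∀ t ∈ Idom, d t = c t) → J = Idom) →
    (0 : ℝ) ∈ Idom

lemma lip_abs {c : ℝ → ℝ} (h : LipschitzWith 1 c) (s t : ℝ) : |c s - c t| ≤ |s - t| := by
  have := h.dist_le_mul s t
  simpa [Real.dist_eq] using this

lemma lip_of_abs {c : ℝ → ℝ} (h : ∀ s t, |c s - c t| ≤ |s - t|) : LipschitzWith 1 c := by
  apply LipschitzWith.of_dist_le_mul
  intro s t
  simpa [Real.dist_eq] using h s t

lemma maxext {U : Set (ℝ × ℝ)} (hU : IsGHCauchyAxis U)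
    (Idom : Set ℝ) (c : ℝ → ℝ) (hne : Idom.Nonempty) (hpc : IsPreconnected Idom)
    (hlip : LipschitzWith 1 c) (hin : ∀ t ∈ Idom, (c t, t) ∈ U) :
    ∃ (J : Set ℝ) (d : ℝ → ℝ), Idom ⊆ J ∧ IsPreconnected J ∧ LipschitzWith 1 d ∧
      (∀ t ∈ J, (d t, t) ∈ U) ∧ (∀ t ∈ Idom, d t = c t) ∧ (0:ℝ) ∈ J := by
  classical
  set G₀ : Set (ℝ × ℝ) := (fun t => (c t, t)) '' Idom with hG₀
  set S : Set (Set (ℝ × ℝ)) := {G | G₀ ⊆ G ∧ G ⊆ U ∧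
    (∀ q ∈ G, ∀ q' ∈ G, |q.1 - q'.1| ≤ |q.2 - q'.2|) ∧
    IsPreconnected (Prod.snd '' G)} with hS
  have hG₀S : G₀ ∈ S := by
    refine ⟨subset_rfl, ?_, ?_, ?_⟩
    · rintro q ⟨t, ht, rfl⟩; exact hin t ht
    · rintro q ⟨t, ht, rfl⟩ q' ⟨t', ht', rfl⟩
      simpa using lip_abs hlip t t'
    · have : Prod.snd '' G₀ = Idom := by
        ext t; constructor
        · rintro ⟨q, ⟨s, hs, rfl⟩, rfl⟩; exact hs
        · intro ht; exact ⟨(c t, t), ⟨t, ht, rfl⟩, rfl⟩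
      rw [this]; exact hpc
  obtain ⟨t₀, ht₀⟩ := hne
  have hzorn : ∃ m, G₀ ⊆ m ∧ Maximal (fun x => x ∈ S) m := by
    apply zorn_subset_nonempty S ?_ G₀ hG₀S
    intro ch hchS hch hchne
    refine ⟨⋃₀ ch, ?_, fun s hs => Set.subset_sUnion_of_mem hs⟩
    obtain ⟨G1, hG1⟩ := hchne
    refine ⟨(hchS hG1).1.trans (Set.subset_sUnion_of_mem hG1), ?_, ?_, ?_⟩
    · intro q hq; obtain ⟨G, hG, hqG⟩ := hq; exact (hchS hG).2.1 hqG
    · rintro q ⟨G, hG, hqG⟩ q' ⟨G', hG', hqG'⟩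
      rcases hch.total hG hG' with h | h
      · exact (hchS hG').2.2.1 q (h hqG) q' hqG'
      · exact (hchS hG).2.2.1 q hqG q' (h hqG')
    · have : Prod.snd '' ⋃₀ ch = ⋃₀ ((fun G => Prod.snd '' G) '' ch) := by
        rw [Set.image_sUnion]
      rw [this]
      apply isPreconnected_sUnion t₀
      · rintro s ⟨G, hG, rfl⟩
        exact ⟨(c t₀, t₀), (hchS hG).1 ⟨t₀, ht₀, rfl⟩, rfl⟩
      · rintro s ⟨G, hG, rfl⟩
        exact (hchS hG).2.2.2
  obtain ⟨Gm, hsub, hmax⟩ := hzorn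
  have hGmS : Gm ∈ S := hmax.1
  set J : Set ℝ := Prod.snd '' Gm with hJ
  have hfun : ∀ q ∈ Gm, ∀ q' ∈ Gm, q.2 = q'.2 → q.1 = q'.1 := by
    intro q hq q' hq' h2
    have := hGmS.2.2.1 q hq q' hq'
    rw [h2] at this; simp at this
    linarith
  have hex : ∀ t ∈ J, ∃ x, (x, t) ∈ Gm := by
    rintro t ⟨q, hq, rfl⟩; exact ⟨q.1, hq⟩
  set d₀ : ℝ → ℝ := fun t => if h : ∃ x, (x, t) ∈ Gm then h.choose else 0 with hd₀
  have hd₀mem : ∀ t ∈ J, (d₀ t, t) ∈ Gm := by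
    intro t ht
    obtain ⟨x, hx⟩ := hex t ht
    have h : ∃ x, (x, t) ∈ Gm := ⟨x, hx⟩
    simp only [hd₀, dif_pos h]
    exact h.choose_spec
  have hgraph : ∀ q ∈ Gm, q = (d₀ q.2, q.2) := by
    intro q hq
    have hq2 : q.2 ∈ J := ⟨q, hq, rfl⟩
    have := hfun q hq (d₀ q.2, q.2) (hd₀mem q.2 hq2) rfl
    exact Prod.ext this rfl
  have hliponJ : LipschitzOnWith 1 d₀ J := by
    intro s hs t ht
    have := hGmS.2.2.1 (d₀ s, s) (hd₀mem s hs) (d₀ t, t) (hd₀mem t ht)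
    simpa [Real.dist_eq, edist_dist, Real.dist_eq] using
      (by simpa [Real.dist_eq] using this : dist (d₀ s) (d₀ t) ≤ 1 * dist s t)
  obtain ⟨d, hdlip, hdeq⟩ := hliponJ.extend_real
  have hdmem : ∀ t ∈ J, (d t, t) ∈ Gm := by
    intro t ht; rw [← hdeq ht]; exact hd₀mem t ht
  have hIJ : Idom ⊆ J := by
    intro t ht; exact ⟨(c t, t), hsub ⟨t, ht, rfl⟩, rfl⟩
  have hdc : ∀ t ∈ Idom, d t = c t := by
    intro t ht
    have h1 : (c t, t) ∈ Gm := hsub ⟨t, ht, rfl⟩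
    have := hfun (d t, t) (hdmem t (hIJ ht)) (c t, t) h1 rfl
    exact this
  have hJpc : IsPreconnected J := hGmS.2.2.2
  refine ⟨J, d, hIJ, hJpc, hdlip, fun t ht => hGmS.2.1 (hdmem t ht), hdc, ?_⟩
  apply hU.2.2 J d ⟨t₀, hIJ ht₀⟩ hJpc hdlip (fun t ht => hGmS.2.1 (hdmem t ht))
  intro J' d' hJ'pc hd'lip hJJ' hin' hagree
  set G' : Set (ℝ × ℝ) := (fun t => (d' t, t)) '' J' with hG'
  have hG'S : G' ∈ S := by
    refine ⟨?_, ?_, ?_, ?_⟩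
    · rintro q ⟨t, ht, rfl⟩
      refine ⟨t, hJJ' (hIJ ht), ?_⟩
      show (d' t, t) = (c t, t)
      rw [hagree t (hIJ ht), hdc t ht]
    · rintro q ⟨t, ht, rfl⟩; exact hin' t ht
    · rintro q ⟨t, ht, rfl⟩ q' ⟨t', ht', rfl⟩
      simpa using lip_abs hd'lip t t'
    · have : Prod.snd '' G' = J' := by
        ext t; constructor
        · rintro ⟨q, ⟨s, hs, rfl⟩, rfl⟩; exact hs
        · intro ht; exact ⟨(d' t, t), ⟨t, ht, rfl⟩, rfl⟩
      rw [this]; exact hJ'pc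
  have hGmG' : Gm ⊆ G' := by
    intro q hq
    have h2 : q.2 ∈ J := ⟨q, hq, rfl⟩
    refine ⟨q.2, hJJ' h2, ?_⟩
    show (d' q.2, q.2) = q
    rw [hagree q.2 h2]
    exact ((hgraph q hq).trans (by rw [hdeq h2])).symm
  have : G' = Gm := (hmax.2 hG'S hGmG').antisymm hGmG'
  ext t; constructor
  · intro ht
    have : (d' t, t) ∈ Gm := by rw [← this]; exact ⟨t, ht, rfl⟩
    exact ⟨(d' t, t), this, rfl⟩
  · intro ht; exact hJJ' ht

lemma nullSeg {U : Set (ℝ × ℝ)} (hU : IsGHCauchyAxis U) {p : ℝ × ℝ} (hp : p ∈ U)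
    {ε : ℝ} (hε : ε = 1 ∨ ε = -1) :
    ∀ σ ∈ Set.uIcc 0 p.2, (p.1 + ε * (p.2 - σ), σ) ∈ U := by
  have habs : |ε| = 1 := by rcases hε with h | h <;> simp [h]
  set c : ℝ → ℝ := fun σ => p.1 + ε * (p.2 - σ) with hc
  have hcT : c p.2 = p.1 := by simp [hc]
  have hcabs : ∀ s t, |c s - c t| = |s - t| := by
    intro s t
    have : c s - c t = ε * (t - s) := by ring
    rw [this, abs_mul, habs, one_mul, abs_sub_comm]
  have hclip : LipschitzWith 1 c := lip_of_abs (fun s t => le_of_eq (hcabs s t))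
  have hccont : Continuous c := hclip.continuous
  have hpU : (c p.2, p.2) ∈ U := by rw [hcT]; exact hp
  rcases le_total 0 p.2 with ht | ht
  · -- T ≥ 0
    rw [Set.uIcc_of_le ht]
    set T := p.2 with hT
    set S : Set ℝ := {s | s ∈ Set.Icc 0 T ∧ ∀ σ ∈ Set.Icc s T, (c σ, σ) ∈ U} with hSdef
    have hTS : T ∈ S := by
      refine ⟨⟨ht, le_refl T⟩, ?_⟩
      intro σ hσ
      have : σ = T := le_antisymm hσ.2 hσ.1
      rw [this]; exact hpU
    have hSne : S.Nonempty := ⟨T, hTS⟩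
    have hbdd : BddBelow S := ⟨0, fun s hs => hs.1.1⟩
    set s0 := sInf S with hs0
    have h0s0 : 0 ≤ s0 := le_csInf hSne (fun s hs => hs.1.1)
    have hs0T : s0 ≤ T := csInf_le hbdd hTS
    have claim1 : ∀ σ, s0 < σ → σ ≤ T → (c σ, σ) ∈ U := by
      intro σ h1 h2
      obtain ⟨s, hsS, hss⟩ := exists_lt_of_csInf_lt hSne h1
      exact hsS.2 σ ⟨le_of_lt hss, h2⟩
    have claim2 : (c s0, s0) ∈ U := by
      rcases eq_or_lt_of_le hs0T with heq | hlt
      · rw [heq]; exact hpU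
      · set Idom := Set.Ioc s0 T with hId
        have hIdne : Idom.Nonempty := Set.nonempty_Ioc.mpr hlt
        have hIdpc : IsPreconnected Idom := isPreconnected_Ioc
        have hIdin : ∀ t ∈ Idom, (c t, t) ∈ U := fun t htI => claim1 t htI.1 htI.2
        obtain ⟨J, d, hIJ, hJpc, hdlip, hdU, hdc, h0J⟩ := maxext hU Idom c hIdne hIdpc hclip hIdin
        have hTJ : T ∈ J := hIJ ⟨hlt, le_refl T⟩
        have hs0J : s0 ∈ J := (hJpc.ordConnected).out h0J hTJ ⟨h0s0, hs0T⟩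
        have heq : d s0 = c s0 := by
          have hcl : Set.EqOn d c (closure Idom) :=
            Set.EqOn.closure hdc hdlip.continuous hccont
          have : s0 ∈ closure Idom := by
            rw [hId, closure_Ioc (ne_of_lt hlt)]
            exact ⟨le_refl s0, hs0T⟩
          exact hcl this
        rw [← heq]; exact hdU s0 hs0J
    have claim3 : s0 = 0 := by
      by_contra h
      have h0lt : 0 < s0 := lt_of_le_of_ne h0s0 (Ne.symm h)
      obtain ⟨δ, hδ, hball⟩ := Metric.isOpen_iff.mp (hU.1) _ claim2
      set s' := max 0 (s0 - δ/2) with hs'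
      have hs'lt : s' < s0 := max_lt h0lt (by linarith)
      have hs'S : s' ∈ S := by
        refine ⟨⟨le_max_left _ _, le_trans (le_of_lt hs'lt) hs0T⟩, ?_⟩
        intro σ hσ
        rcases lt_or_ge s0 σ with h1 | h1
        · exact claim1 σ h1 hσ.2
        · apply hball
          rw [Metric.mem_ball, Prod.dist_eq]
          have h2 : |σ - s0| ≤ δ/2 := by
            rw [abs_le]
            constructor
            · have := le_trans (le_max_right 0 (s0 - δ/2)) hσ.1
              linarith
            · linarith
          apply lt_of_le_of_lt (max_le _ _) (by linarith : δ/2 < δ)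
          · rw [Real.dist_eq, hcabs]; exact h2
          · rw [Real.dist_eq]; exact h2
      have := csInf_le hbdd hs'S
      linarith
    intro σ hσ
    rcases eq_or_lt_of_le hσ.1 with h | h
    · rw [claim3] at claim2; rw [← h]; exact claim2
    · exact claim1 σ (by rw [claim3]; exact h) hσ.2
  · -- T ≤ 0
    rw [Set.uIcc_of_ge ht]
    set T := p.2 with hT
    set S : Set ℝ := {s | s ∈ Set.Icc T 0 ∧ ∀ σ ∈ Set.Icc T s, (c σ, σ) ∈ U} with hSdef
    have hTS : T ∈ S := by
      refine ⟨⟨le_refl T, ht⟩, ?_⟩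
      intro σ hσ
      have : σ = T := le_antisymm hσ.2 hσ.1
      rw [this]; exact hpU
    have hSne : S.Nonempty := ⟨T, hTS⟩
    have hbdd : BddAbove S := ⟨0, fun s hs => hs.1.2⟩
    set s0 := sSup S with hs0
    have h0s0 : s0 ≤ 0 := csSup_le hSne (fun s hs => hs.1.2)
    have hs0T : T ≤ s0 := le_csSup hbdd hTS
    have claim1 : ∀ σ, σ < s0 → T ≤ σ → (c σ, σ) ∈ U := by
      intro σ h1 h2
      obtain ⟨s, hsS, hss⟩ := exists_lt_of_lt_csSup hSne h1
      exact hsS.2 σ ⟨h2, le_of_lt hss⟩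
    have claim2 : (c s0, s0) ∈ U := by
      rcases eq_or_lt_of_le hs0T with heq | hlt
      · rw [← heq]; exact hpU
      · set Idom := Set.Ico T s0 with hId
        have hIdne : Idom.Nonempty := Set.nonempty_Ico.mpr hlt
        have hIdpc : IsPreconnected Idom := isPreconnected_Ico
        have hIdin : ∀ t ∈ Idom, (c t, t) ∈ U := fun t htI => claim1 t htI.2 htI.1
        obtain ⟨J, d, hIJ, hJpc, hdlip, hdU, hdc, h0J⟩ := maxext hU Idom c hIdne hIdpc hclip hIdin
        have hTJ : T ∈ J := hIJ ⟨le_refl T, hlt⟩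
        have hs0J : s0 ∈ J := (hJpc.ordConnected).out hTJ h0J ⟨hs0T, h0s0⟩
        have heq : d s0 = c s0 := by
          have hcl : Set.EqOn d c (closure Idom) :=
            Set.EqOn.closure hdc hdlip.continuous hccont
          have : s0 ∈ closure Idom := by
            rw [hId, closure_Ico (ne_of_lt hlt)]
            exact ⟨hs0T, le_refl s0⟩
          exact hcl this
        rw [← heq]; exact hdU s0 hs0J
    have claim3 : s0 = 0 := by
      by_contra h
      have h0lt : s0 < 0 := lt_of_le_of_ne h0s0 h
      obtain ⟨δ, hδ, hball⟩ := Metric.isOpen_iff.mp (hU.1) _ claim2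
      set s' := min 0 (s0 + δ/2) with hs'
      have hs'lt : s0 < s' := lt_min h0lt (by linarith)
      have hs'S : s' ∈ S := by
        refine ⟨⟨le_trans hs0T (le_of_lt hs'lt), min_le_left _ _⟩, ?_⟩
        intro σ hσ
        rcases lt_or_ge σ s0 with h1 | h1
        · exact claim1 σ h1 hσ.1
        · apply hball
          rw [Metric.mem_ball, Prod.dist_eq]
          have h2 : |σ - s0| ≤ δ/2 := by
            rw [abs_le]
            constructor
            · linarith
            · have := le_trans hσ.2 (min_le_right 0 (s0 + δ/2))
              linarith
          apply lt_of_le_of_lt (max_le _ _) (by linarith : δ/2 < δ)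
          · rw [Real.dist_eq, hcabs]; exact h2
          · rw [Real.dist_eq]; exact h2
      have := le_csSup hbdd hs'S
      linarith
    intro σ hσ
    rcases eq_or_lt_of_le hσ.2 with h | h
    · rw [claim3] at claim2; rw [h]; exact claim2
    · exact claim1 σ (by rw [claim3]; exact h) hσ.1

lemma comp_line {U : Set (ℝ × ℝ)} {F : ℝ × ℝ → ℝ × ℝ} (hUo : IsOpen U)
    (hF : ContDiffOn ℝ (⊤ : ℕ∞) F U) {γ : ℝ → ℝ × ℝ} {v w σ ζ : ℝ}
    (hγ : HasDerivAt γ (v, w) σ) (hmem : γ σ ∈ U) :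
    HasDerivAt (fun τ => (F (γ τ)).1 + ζ * (F (γ τ)).2)
      ((fderiv ℝ F (γ σ) (v, w)).1 + ζ * (fderiv ℝ F (γ σ) (v, w)).2) σ := by
  have hdF : DifferentiableAt ℝ F (γ σ) :=
    (hF.contDiffAt (hUo.mem_nhds hmem)).differentiableAt (by simp)
  have h1 : HasDerivAt (fun τ => F (γ τ)) (fderiv ℝ F (γ σ) (v, w)) σ :=
    hdF.hasFDerivAt.comp_hasDerivAt σ hγ
  set L : (ℝ × ℝ) →L[ℝ] ℝ :=
    ContinuousLinearMap.fst ℝ ℝ ℝ + ζ • ContinuousLinearMap.snd ℝ ℝ ℝ with hL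
  have h2 := L.hasFDerivAt.comp_hasDerivAt σ h1
  have : ∀ q : ℝ × ℝ, L q = q.1 + ζ * q.2 := by
    intro q; simp [hL]
  simpa [Function.comp_def, this] using h2

lemma const_along {U : Set (ℝ × ℝ)} {F : ℝ × ℝ → ℝ × ℝ} (hUo : IsOpen U)
    (hF : ContDiffOn ℝ (⊤ : ℕ∞) F U) (η ζ : ℝ)
    (hzero : ∀ q ∈ U, (fderiv ℝ F q (η, 1)).1 + ζ * (fderiv ℝ F q (η, 1)).2 = 0)
    (a T : ℝ) (hseg : ∀ σ ∈ Set.uIcc 0 T, (a + η * σ, σ) ∈ U) :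
    (F (a + η * T, T)).1 + ζ * (F (a + η * T, T)).2 = (F (a, 0)).1 + ζ * (F (a, 0)).2 := by
  set γ : ℝ → ℝ × ℝ := fun τ => (a + η * τ, τ) with hγdef
  set g : ℝ → ℝ := fun τ => (F (γ τ)).1 + ζ * (F (γ τ)).2 with hg
  have hγd : ∀ τ : ℝ, HasDerivAt γ (η, 1) τ := by
    intro τ
    apply HasDerivAt.prodMk
    · simpa using ((hasDerivAt_id τ).const_mul η).const_add a
    · exact hasDerivAt_id τ
  have hder : ∀ τ ∈ Set.uIcc 0 T, HasDerivAt g 0 τ := by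
    intro τ hτ
    have := comp_line hUo hF (ζ := ζ) (hγd τ) (hseg τ hτ)
    rw [hzero (γ τ) (hseg τ hτ)] at this
    exact this
  have huicc : Set.uIcc 0 T = Set.Icc (min 0 T) (max 0 T) := rfl
  have hconst := constant_of_has_deriv_right_zero (f := g) (a := min 0 T) (b := max 0 T)
    (fun τ hτ => ((hder τ (by rwa [huicc])).continuousAt).continuousWithinAt)
    (fun τ hτ => ((hder τ (by rw [huicc]; exact ⟨hτ.1, le_of_lt hτ.2⟩)).hasDerivWithinAt))
  have h0 : (0:ℝ) ∈ Set.Icc (min 0 T) (max 0 T) := by rw [← huicc]; exact Set.left_mem_uIcc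
  have hT : T ∈ Set.Icc (min 0 T) (max 0 T) := by rw [← huicc]; exact Set.right_mem_uIcc
  have := (hconst T hT).trans (hconst 0 h0).symm
  simpa [hg, hγdef] using this

lemma ptwise {Op : ℝ} (hOp : 0 < Op) {L : (ℝ × ℝ) →L[ℝ] ℝ × ℝ}
    (hconf : ∀ v : ℝ × ℝ, (L v).1 ^ 2 - (L v).2 ^ 2 = Op ^ 2 * (v.1 ^ 2 - v.2 ^ 2)) :
    ((L (1, -1)).1 + (L (1, -1)).2 = 0 ∧ (L (1, 1)).1 - (L (1, 1)).2 = 0 ∧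
      (L (1, 1)).1 + (L (1, 1)).2 ≠ 0)
    ∨ ((L (1, 1)).1 + (L (1, 1)).2 = 0 ∧ (L (1, -1)).1 - (L (1, -1)).2 = 0 ∧
      (L (1, -1)).1 + (L (1, -1)).2 ≠ 0) := by
  set a1 := (L (1, 1)).1; set a2 := (L (1, 1)).2
  set b1 := (L (1, -1)).1; set b2 := (L (1, -1)).2
  have e1 : a1 ^ 2 - a2 ^ 2 = 0 := by simpa using hconf (1, 1)
  have e2 : b1 ^ 2 - b2 ^ 2 = 0 := by simpa using hconf (1, -1)
  have e3 : (L (1, 0)).1 ^ 2 - (L (1, 0)).2 ^ 2 = Op ^ 2 := by simpa using hconf (1, 0)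
  have hv : ((1 : ℝ), (0 : ℝ)) = (2 : ℝ)⁻¹ • ((1 : ℝ), (1 : ℝ)) + (2 : ℝ)⁻¹ • ((1 : ℝ), (-1 : ℝ)) := by
    rw [Prod.smul_mk, Prod.smul_mk, Prod.mk_add_mk]
    norm_num
  have hL10 : L (1, 0) = (2 : ℝ)⁻¹ • L (1, 1) + (2 : ℝ)⁻¹ • L (1, -1) := by
    rw [hv, map_add, map_smul, map_smul]
  have h1 : (L (1, 0)).1 = (2 : ℝ)⁻¹ * a1 + (2 : ℝ)⁻¹ * b1 := by rw [hL10]; rfl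
  have h2 : (L (1, 0)).2 = (2 : ℝ)⁻¹ * a2 + (2 : ℝ)⁻¹ * b2 := by rw [hL10]; rfl
  rw [h1, h2] at e3
  have key3 : (a1 + a2) * (b1 - b2) + (b1 + b2) * (a1 - a2) = 4 * Op ^ 2 := by
    linear_combination 4 * e3 - e1 - e2
  have hOp2 : 0 < Op ^ 2 := pow_pos hOp 2
  by_cases h : a1 + a2 = 0
  · right
    have h5 : (b1 + b2) * (a1 - a2) = 4 * Op ^ 2 := by
      rw [h] at key3; linarith
    have hbne : b1 + b2 ≠ 0 := by
      intro h0; rw [h0] at h5; simp at h5; linarith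
    have hbm : b1 - b2 = 0 := by
      have : (b1 + b2) * (b1 - b2) = 0 := by linear_combination e2
      rcases mul_eq_zero.mp this with h' | h'
      · exact absurd h' hbne
      · exact h'
    exact ⟨h, hbm, hbne⟩
  · left
    have ham : a1 - a2 = 0 := by
      have : (a1 + a2) * (a1 - a2) = 0 := by linear_combination e1
      rcases mul_eq_zero.mp this with h' | h'
      · exact absurd h' h
      · exact h'
    have h5 : (a1 + a2) * (b1 - b2) = 4 * Op ^ 2 := by
      rw [ham] at key3; linarith
    have hbm : b1 - b2 ≠ 0 := by
      intro h0; rw [h0] at h5; simp at h5; linarith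
    have hb : b1 + b2 = 0 := by
      have : (b1 + b2) * (b1 - b2) = 0 := by linear_combination e2
      rcases mul_eq_zero.mp this with h' | h'
      · exact h'
      · exact absurd h' hbm
    exact ⟨hb, ham, h⟩

lemma monoOrAnti {f : ℝ → ℝ} (hf : ContDiff ℝ (⊤ : ℕ∞) f) (hnz : ∀ s, deriv f s ≠ 0) :
    StrictMono f ∨ StrictAnti f := by
  have hc : Continuous (deriv f) := hf.continuous_deriv (by simp)
  have hsign : (∀ s, 0 < deriv f s) ∨ (∀ s, deriv f s < 0) := by
    rcases lt_or_gt_of_ne (hnz 0) with h0 | h0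
    · right
      intro s
      rcases lt_or_gt_of_ne (hnz s) with h | h
      · exact h
      exfalso
      have hm : (0 : ℝ) ∈ Set.uIcc (deriv f 0) (deriv f s) :=
        Set.mem_uIcc.mpr (Or.inl ⟨h0.le, h.le⟩)
      obtain ⟨x, _, hx⟩ := intermediate_value_uIcc (hc.continuousOn) hm
      exact hnz x hx
    · left
      intro s
      rcases lt_or_gt_of_ne (hnz s) with h | h
      swap
      · exact h
      exfalso
      have hm : (0 : ℝ) ∈ Set.uIcc (deriv f 0) (deriv f s) :=
        Set.mem_uIcc.mpr (Or.inr ⟨h.le, h0.le⟩)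
      obtain ⟨x, _, hx⟩ := intermediate_value_uIcc (hc.continuousOn) hm
      exact hnz x hx
  rcases hsign with h | h
  · exact Or.inl (strictMono_of_deriv_pos h)
  · exact Or.inr (strictAnti_of_deriv_neg h)

lemma mkHomeo {f : ℝ → ℝ} (hm : StrictMono f ∨ StrictAnti f)
    (hs : Function.Surjective f) : ∃ h : ℝ ≃ₜ ℝ, ⇑h = f := by
  rcases hm with hm | hm
  · exact ⟨(StrictMono.orderIsoOfSurjective f hm hs).toHomeomorph, rfl⟩
  · have hg : StrictMono (fun x : ℝ => f (-x)) := fun a b hab => hm (by linarith)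
    have hgs : Function.Surjective (fun x : ℝ => f (-x)) := by
      intro y; obtain ⟨x, hx⟩ := hs y; exact ⟨-x, by simpa using hx⟩
    refine ⟨(Homeomorph.neg ℝ).trans
      (StrictMono.orderIsoOfSurjective (fun x : ℝ => f (-x)) hg hgs).toHomeomorph, ?_⟩
    funext x
    show f (-(-x)) = f x
    rw [neg_neg]

lemma invSmooth (h : ℝ ≃ₜ ℝ) (hf : ContDiff ℝ (⊤ : ℕ∞) ⇑h) (hd : ∀ x, deriv h x ≠ 0) :
    ContDiff ℝ (⊤ : ℕ∞) ⇑h.symm := by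
  rw [contDiff_iff_contDiffAt]
  intro a
  have hdiff : DifferentiableAt ℝ h (h.symm a) := (hf.differentiable (by simp)) _
  have := OpenPartialHomeomorph.contDiffAt_symm_deriv (𝕜 := ℝ) (n := (⊤ : ℕ∞))
    h.toOpenPartialHomeomorph (hd (h.symm a)) (by trivial)
    hdiff.hasDerivAt (hf.contDiffAt)
  simpa [Homeomorph.toOpenPartialHomeomorph_symm_apply] using this

lemma Upc {U : Set (ℝ × ℝ)} (hax : ∀ x : ℝ, (x, (0 : ℝ)) ∈ U)
    (hseg : ∀ p ∈ U, ∀ σ ∈ Set.uIcc 0 p.2, (p.1 + (p.2 - σ), σ) ∈ U) :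
    IsPreconnected U := by
  set axis : Set (ℝ × ℝ) := (fun x : ℝ => (x, (0 : ℝ))) '' Set.univ with haxis
  have haxpc : IsPreconnected axis :=
    isPreconnected_univ.image _ (continuous_id.prodMk continuous_const).continuousOn
  set C : ℝ × ℝ → Set (ℝ × ℝ) :=
    fun p => axis ∪ ((fun σ => (p.1 + (p.2 - σ), σ)) '' Set.uIcc 0 p.2) with hC
  have hCpc : ∀ p, IsPreconnected (C p) := by
    intro p
    apply IsPreconnected.union (p.1 + p.2, 0)
    · exact ⟨p.1 + p.2, Set.mem_univ _, rfl⟩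
    · exact ⟨0, Set.left_mem_uIcc, by simp⟩
    · exact haxpc
    · apply IsPreconnected.image
      · rw [Set.uIcc]; exact isPreconnected_Icc
      · exact ((continuous_const.add (continuous_const.sub continuous_id)).prodMk continuous_id).continuousOn
  have hCU : ∀ p ∈ U, C p ⊆ U := by
    intro p hp q hq
    rcases hq with hq | hq
    · obtain ⟨x, _, rfl⟩ := hq; exact hax x
    · obtain ⟨σ, hσ, rfl⟩ := hq; exact hseg p hp σ hσ
  have hUeq : U = ⋃₀ (C '' U) := by
    ext q; constructor
    · intro hq
      exact ⟨C q, ⟨q, hq, rfl⟩, Or.inr ⟨q.2, Set.right_mem_uIcc, by simp⟩⟩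
    · rintro ⟨s, ⟨p, hp, rfl⟩, hqs⟩
      exact hCU p hp hqs
  rw [hUeq]
  apply isPreconnected_sUnion ((0 : ℝ), (0 : ℝ))
  · rintro s ⟨p, hp, rfl⟩
    exact Or.inl ⟨0, Set.mem_univ _, rfl⟩
  · rintro s ⟨p, hp, rfl⟩
    exact hCpc p

lemma glob {U : Set (ℝ × ℝ)} {F : ℝ × ℝ → ℝ × ℝ} {Ω : ℝ × ℝ → ℝ}
    (hUo : IsOpen U) (hpc : IsPreconnected U) (hF : ContDiffOn ℝ (⊤ : ℕ∞) F U)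
    (hΩ : ∀ p ∈ U, 0 < Ω p)
    (hconf' : ∀ p ∈ U, ∀ v : ℝ × ℝ,
      ((fderiv ℝ F p) v).1 ^ 2 - ((fderiv ℝ F p) v).2 ^ 2 = Ω p ^ 2 * (v.1 ^ 2 - v.2 ^ 2)) :
    (∀ p ∈ U, (fderiv ℝ F p (1, -1)).1 + (fderiv ℝ F p (1, -1)).2 = 0 ∧
      (fderiv ℝ F p (1, 1)).1 - (fderiv ℝ F p (1, 1)).2 = 0) ∨
    (∀ p ∈ U, (fderiv ℝ F p (1, 1)).1 + (fderiv ℝ F p (1, 1)).2 = 0 ∧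
      (fderiv ℝ F p (1, -1)).1 - (fderiv ℝ F p (1, -1)).2 = 0) := by
  have hcont : ContinuousOn (fderiv ℝ F) U := hF.continuousOn_fderiv_of_isOpen hUo (by simp)
  have heval : ∀ v : ℝ × ℝ, Continuous (fun L : (ℝ × ℝ) →L[ℝ] ℝ × ℝ => (L v).1 + (L v).2) := by
    intro v
    have h1 : Continuous (fun L : (ℝ × ℝ) →L[ℝ] ℝ × ℝ => L v) :=
      (ContinuousLinearMap.apply ℝ (ℝ × ℝ) v).continuous
    exact (continuous_fst.comp h1).add (continuous_snd.comp h1)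
  set g1 : ℝ × ℝ → ℝ := fun p => (fderiv ℝ F p (1, 1)).1 + (fderiv ℝ F p (1, 1)).2 with hg1d
  set g2 : ℝ × ℝ → ℝ := fun p => (fderiv ℝ F p (1, -1)).1 + (fderiv ℝ F p (1, -1)).2 with hg2d
  have hg1 : ContinuousOn g1 U := (heval (1, 1)).comp_continuousOn hcont
  have hg2 : ContinuousOn g2 U := (heval (1, -1)).comp_continuousOn hcont
  set V1 := U ∩ g1 ⁻¹' {(0:ℝ)}ᶜ with hV1d
  set V2 := U ∩ g2 ⁻¹' {(0:ℝ)}ᶜ with hV2d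
  have hV1o : IsOpen V1 := hg1.isOpen_inter_preimage hUo isOpen_compl_singleton
  have hV2o : IsOpen V2 := hg2.isOpen_inter_preimage hUo isOpen_compl_singleton
  have hpt := fun p (hp : p ∈ U) => ptwise (hΩ p hp) (hconf' p hp)
  have hdisj : Disjoint V1 V2 := by
    rw [Set.disjoint_left]
    rintro p ⟨hpU, hp1⟩ ⟨_, hp2⟩
    rcases hpt p hpU with h | h
    · exact hp2 h.1
    · exact hp1 h.1
  have hcover : U ⊆ V1 ∪ V2 := by
    intro p hp
    rcases hpt p hp with h | h
    · exact Or.inl ⟨hp, h.2.2⟩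
    · exact Or.inr ⟨hp, h.2.2⟩
  rcases hpc.subset_or_subset hV1o hV2o hdisj hcover with h | h
  · left
    intro p hp
    rcases hpt p hp with h' | h'
    · exact ⟨h'.1, h'.2.1⟩
    · exact absurd h'.1 (h hp).2
  · right
    intro p hp
    rcases hpt p hp with h' | h'
    · exact absurd h'.1 (h hp).2
    · exact ⟨h'.1, h'.2.1⟩

/-- Let `F : (x,t) ↦ (X, T)` be a `C^∞` conformal diffeomorphism from a
globally hyperbolic open subset `U` of `ℝ²₁` containing the `x`-axis as a Cauchy surface
onto an open subset of `ℝ²₁` containing the `x`-axis. Then there exist unique `C^∞`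
diffeomorphisms `φ, ψ` of `ℝ` with `φ′ψ′ > 0` everywhere such that either
`F(x,t) = (φ(x+t)+ψ(x−t), φ(x+t)−ψ(x−t))` or `F(x,t) = (φ(x−t)+ψ(x+t), φ(x−t)−ψ(x+t))`
on `U`. -/
theorem conformal_diffeo_dAlembert_form
    (U : Set (ℝ × ℝ)) (hU : IsGHCauchyAxis U)
    (F G : ℝ × ℝ → ℝ × ℝ)
    (hbij : Set.BijOn F U (F '' U)) (hinv : Set.InvOn G F U (F '' U))
    (hopen : IsOpen (F '' U)) (haxis : ∀ x : ℝ, (x, (0 : ℝ)) ∈ F '' U)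
    (hFsmooth : ContDiffOn ℝ (⊤ : ℕ∞) F U) (hGsmooth : ContDiffOn ℝ (⊤ : ℕ∞) G (F '' U))
    -- `F` is conformal: its differential scales the Minkowski form by `Ω² > 0`
    (Ω : ℝ × ℝ → ℝ) (hΩ : ∀ p ∈ U, 0 < Ω p)
    (hconf : ∀ p ∈ U, ∀ v : ℝ × ℝ,
      ((fderivWithin ℝ F U p) v).1 ^ 2 - ((fderivWithin ℝ F U p) v).2 ^ 2
        = (Ω p) ^ 2 * (v.1 ^ 2 - v.2 ^ 2)) :
    ∃! pr : (ℝ ≃ₜ ℝ) × (ℝ ≃ₜ ℝ),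
      (ContDiff ℝ (⊤ : ℕ∞) pr.1 ∧ ContDiff ℝ (⊤ : ℕ∞) pr.1.symm ∧
       ContDiff ℝ (⊤ : ℕ∞) pr.2 ∧ ContDiff ℝ (⊤ : ℕ∞) pr.2.symm) ∧
      (∀ s : ℝ, 0 < deriv pr.1 s * deriv pr.2 s) ∧
      ((∀ p ∈ U, F p = (pr.1 (p.1 + p.2) + pr.2 (p.1 - p.2),
                        pr.1 (p.1 + p.2) - pr.2 (p.1 - p.2))) ∨
       (∀ p ∈ U, F p = (pr.1 (p.1 - p.2) + pr.2 (p.1 + p.2),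
                        pr.1 (p.1 - p.2) - pr.2 (p.1 + p.2)))) := by
  have hUo : IsOpen U := hU.1
  have hax : ∀ x : ℝ, (x, (0 : ℝ)) ∈ U := hU.2.1
  have hconf' : ∀ p ∈ U, ∀ v : ℝ × ℝ,
      ((fderiv ℝ F p) v).1 ^ 2 - ((fderiv ℝ F p) v).2 ^ 2 = Ω p ^ 2 * (v.1 ^ 2 - v.2 ^ 2) := by
    intro p hp v
    rw [← fderivWithin_of_isOpen hUo hp]
    exact hconf p hp v
  set φ : ℝ → ℝ := fun s => ((F (s, 0)).1 + (F (s, 0)).2) / 2 with hφdef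
  set ψ : ℝ → ℝ := fun s => ((F (s, 0)).1 - (F (s, 0)).2) / 2 with hψdef
  -- smoothness of φ and ψ
  have hFat : ∀ s : ℝ, ContDiffAt ℝ (⊤ : ℕ∞) F ((s : ℝ), (0 : ℝ)) :=
    fun s => hFsmooth.contDiffAt (hUo.mem_nhds (hax s))
  have hlin : ContDiff ℝ (⊤ : ℕ∞) (fun s : ℝ => ((s : ℝ), (0 : ℝ))) := contDiff_id.prodMk contDiff_const
  have hFc : ∀ s : ℝ, ContDiffAt ℝ (⊤ : ℕ∞) (fun s : ℝ => F (s, 0)) s :=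
    fun s => (hFat s).comp s hlin.contDiffAt
  have hφs : ContDiff ℝ (⊤ : ℕ∞) φ := by
    rw [contDiff_iff_contDiffAt]
    intro s
    exact ((contDiff_fst.add contDiff_snd).div_const 2).contDiffAt.comp s (hFc s)
  have hψs : ContDiff ℝ (⊤ : ℕ∞) ψ := by
    rw [contDiff_iff_contDiffAt]
    intro s
    exact ((contDiff_fst.sub contDiff_snd).div_const 2).contDiffAt.comp s (hFc s)
  -- derivatives of φ and ψ
  have hγax : ∀ s : ℝ, HasDerivAt (fun τ : ℝ => ((τ : ℝ), (0 : ℝ))) ((1 : ℝ), (0 : ℝ)) s :=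
    fun s => (hasDerivAt_id s).prodMk (hasDerivAt_const s 0)
  have hφd : ∀ s : ℝ,
      HasDerivAt φ ((fderiv ℝ F (s, 0) (1, 0)).1 / 2 + (fderiv ℝ F (s, 0) (1, 0)).2 / 2) s := by
    intro s
    have h := (comp_line hUo hFsmooth (ζ := 1) (hγax s) (hax s)).div_const 2
    have hfun : φ = fun τ : ℝ => ((F (τ, 0)).1 + 1 * (F (τ, 0)).2) / 2 := by
      funext τ; rw [hφdef]; ring
    rw [hfun]
    exact h.congr_deriv (by ring)
  have hψd : ∀ s : ℝ,
      HasDerivAt ψ ((fderiv ℝ F (s, 0) (1, 0)).1 / 2 - (fderiv ℝ F (s, 0) (1, 0)).2 / 2) s := by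
    intro s
    have h := (comp_line hUo hFsmooth (ζ := -1) (hγax s) (hax s)).div_const 2
    have hfun : ψ = fun τ : ℝ => ((F (τ, 0)).1 + (-1) * (F (τ, 0)).2) / 2 := by
      funext τ; rw [hψdef]; ring
    rw [hfun]
    exact h.congr_deriv (by ring)
  -- positivity of the product of derivatives
  have hpos : ∀ s : ℝ, 0 < deriv φ s * deriv ψ s := by
    intro s
    rw [(hφd s).deriv, (hψd s).deriv]
    have h := hconf' (s, 0) (hax s) (1, 0)
    norm_num at h
    nlinarith [pow_pos (hΩ (s, 0) (hax s)) 2]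
  have hφnz : ∀ s, deriv φ s ≠ 0 := by
    intro s h
    have := hpos s
    rw [h, zero_mul] at this
    exact lt_irrefl 0 this
  have hψnz : ∀ s, deriv ψ s ≠ 0 := by
    intro s h
    have := hpos s
    rw [h, mul_zero] at this
    exact lt_irrefl 0 this
  -- global dichotomy and the d'Alembert form
  have hpcU : IsPreconnected U := by
    apply Upc hax
    intro p hp σ hσ
    have := nullSeg hU hp (Or.inl rfl) σ hσ
    simpa using this
  have hneg : ∀ q : ℝ × ℝ, fderiv ℝ F q ((-1 : ℝ), (1 : ℝ)) = -(fderiv ℝ F q (1, -1)) := by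
    intro q
    have hv : ((-1 : ℝ), (1 : ℝ)) = -((1 : ℝ), (-1 : ℝ)) := by simp [Prod.ext_iff]
    rw [hv, map_neg]
  have key : (∀ p ∈ U, F p = (φ (p.1 + p.2) + ψ (p.1 - p.2), φ (p.1 + p.2) - ψ (p.1 - p.2))) ∨
      (∀ p ∈ U, F p = (φ (p.1 - p.2) + ψ (p.1 + p.2), φ (p.1 - p.2) - ψ (p.1 + p.2))) := by
    rcases glob hUo hpcU hFsmooth hΩ hconf' with hcase | hcase
    · left
      intro p hp
      have keyA : (F p).1 + (F p).2 = (F (p.1 + p.2, 0)).1 + (F (p.1 + p.2, 0)).2 := by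
        have hz : ∀ q ∈ U,
            (fderiv ℝ F q ((-1 : ℝ), 1)).1 + 1 * (fderiv ℝ F q ((-1 : ℝ), 1)).2 = 0 := by
          intro q hq
          rw [hneg q]
          have := (hcase q hq).1
          simp only [ContinuousLinearMap.neg_apply, Prod.fst_neg, Prod.snd_neg]
          linarith
        have hseg : ∀ σ ∈ Set.uIcc 0 p.2, ((p.1 + p.2) + (-1) * σ, σ) ∈ U := by
          intro σ hσ
          have := nullSeg hU hp (Or.inl rfl) σ hσ
          have heq : ((p.1 + p.2) + (-1) * σ, σ) = (p.1 + 1 * (p.2 - σ), σ) := by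
            rw [Prod.mk.injEq]; constructor; ring; rfl
          rw [heq]; exact this
        have h := const_along hUo hFsmooth (-1) 1 hz (p.1 + p.2) p.2 hseg
        have heq2 : ((p.1 + p.2) + (-1) * p.2, p.2) = p := by
          rw [Prod.mk.injEq]; constructor; ring; rfl
        rw [heq2] at h
        linarith
      have keyB : (F p).1 - (F p).2 = (F (p.1 - p.2, 0)).1 - (F (p.1 - p.2, 0)).2 := by
        have hz : ∀ q ∈ U,
            (fderiv ℝ F q ((1 : ℝ), 1)).1 + (-1) * (fderiv ℝ F q ((1 : ℝ), 1)).2 = 0 := by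
          intro q hq
          have := (hcase q hq).2
          linarith
        have hseg : ∀ σ ∈ Set.uIcc 0 p.2, ((p.1 - p.2) + 1 * σ, σ) ∈ U := by
          intro σ hσ
          have := nullSeg hU hp (Or.inr rfl) σ hσ
          have heq : ((p.1 - p.2) + 1 * σ, σ) = (p.1 + (-1) * (p.2 - σ), σ) := by
            rw [Prod.mk.injEq]; constructor; ring; rfl
          rw [heq]; exact this
        have h := const_along hUo hFsmooth 1 (-1) hz (p.1 - p.2) p.2 hseg
        have heq2 : ((p.1 - p.2) + 1 * p.2, p.2) = p := by
          rw [Prod.mk.injEq]; constructor; ring; rfl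
        rw [heq2] at h
        linarith
      have h1 : (F p).1 = φ (p.1 + p.2) + ψ (p.1 - p.2) := by
        rw [hφdef, hψdef]; dsimp only; linarith
      have h2 : (F p).2 = φ (p.1 + p.2) - ψ (p.1 - p.2) := by
        rw [hφdef, hψdef]; dsimp only; linarith
      rw [Prod.ext_iff]; exact ⟨h1, h2⟩
    · right
      intro p hp
      have keyA : (F p).1 + (F p).2 = (F (p.1 - p.2, 0)).1 + (F (p.1 - p.2, 0)).2 := by
        have hz : ∀ q ∈ U,
            (fderiv ℝ F q ((1 : ℝ), 1)).1 + 1 * (fderiv ℝ F q ((1 : ℝ), 1)).2 = 0 := by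
          intro q hq
          have := (hcase q hq).1
          linarith
        have hseg : ∀ σ ∈ Set.uIcc 0 p.2, ((p.1 - p.2) + 1 * σ, σ) ∈ U := by
          intro σ hσ
          have := nullSeg hU hp (Or.inr rfl) σ hσ
          have heq : ((p.1 - p.2) + 1 * σ, σ) = (p.1 + (-1) * (p.2 - σ), σ) := by
            rw [Prod.mk.injEq]; constructor; ring; rfl
          rw [heq]; exact this
        have h := const_along hUo hFsmooth 1 1 hz (p.1 - p.2) p.2 hseg
        have heq2 : ((p.1 - p.2) + 1 * p.2, p.2) = p := by
          rw [Prod.mk.injEq]; constructor; ring; rfl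
        rw [heq2] at h
        linarith
      have keyB : (F p).1 - (F p).2 = (F (p.1 + p.2, 0)).1 - (F (p.1 + p.2, 0)).2 := by
        have hz : ∀ q ∈ U,
            (fderiv ℝ F q ((-1 : ℝ), 1)).1 + (-1) * (fderiv ℝ F q ((-1 : ℝ), 1)).2 = 0 := by
          intro q hq
          rw [hneg q]
          have := (hcase q hq).2
          simp only [ContinuousLinearMap.neg_apply, Prod.fst_neg, Prod.snd_neg]
          linarith
        have hseg : ∀ σ ∈ Set.uIcc 0 p.2, ((p.1 + p.2) + (-1) * σ, σ) ∈ U := by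
          intro σ hσ
          have := nullSeg hU hp (Or.inl rfl) σ hσ
          have heq : ((p.1 + p.2) + (-1) * σ, σ) = (p.1 + 1 * (p.2 - σ), σ) := by
            rw [Prod.mk.injEq]; constructor; ring; rfl
          rw [heq]; exact this
        have h := const_along hUo hFsmooth (-1) (-1) hz (p.1 + p.2) p.2 hseg
        have heq2 : ((p.1 + p.2) + (-1) * p.2, p.2) = p := by
          rw [Prod.mk.injEq]; constructor; ring; rfl
        rw [heq2] at h
        linarith
      have h1 : (F p).1 = φ (p.1 - p.2) + ψ (p.1 + p.2) := by
        rw [hφdef, hψdef]; dsimp only; linarith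
      have h2 : (F p).2 = φ (p.1 - p.2) - ψ (p.1 + p.2) := by
        rw [hφdef, hψdef]; dsimp only; linarith
      rw [Prod.ext_iff]; exact ⟨h1, h2⟩
  -- surjectivity
  have hsurj : ∀ y : ℝ, (∃ a, φ a = y) ∧ (∃ b, ψ b = y) := by
    intro y
    obtain ⟨p, hpU, hFp⟩ := haxis (2 * y)
    rcases key with k | k
    · have h := (k p hpU).symm.trans hFp
      rw [Prod.ext_iff] at h
      obtain ⟨ha, hb⟩ := h
      exact ⟨⟨p.1 + p.2, by dsimp only at ha hb; linarith⟩,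
             ⟨p.1 - p.2, by dsimp only at ha hb; linarith⟩⟩
    · have h := (k p hpU).symm.trans hFp
      rw [Prod.ext_iff] at h
      obtain ⟨ha, hb⟩ := h
      exact ⟨⟨p.1 - p.2, by dsimp only at ha hb; linarith⟩,
             ⟨p.1 + p.2, by dsimp only at ha hb; linarith⟩⟩
  obtain ⟨hφh, hφcoe⟩ := mkHomeo (monoOrAnti hφs hφnz) (fun y => (hsurj y).1)
  obtain ⟨hψh, hψcoe⟩ := mkHomeo (monoOrAnti hψs hψnz) (fun y => (hsurj y).2)
  refine ⟨(hφh, hψh), ⟨⟨?_, ?_, ?_, ?_⟩, ?_, ?_⟩, ?_⟩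
  · show ContDiff ℝ (⊤ : ℕ∞) ⇑hφh; rw [hφcoe]; exact hφs
  · exact invSmooth hφh (by rw [hφcoe]; exact hφs) (fun x => by rw [hφcoe]; exact hφnz x)
  · show ContDiff ℝ (⊤ : ℕ∞) ⇑hψh; rw [hψcoe]; exact hψs
  · exact invSmooth hψh (by rw [hψcoe]; exact hψs) (fun x => by rw [hψcoe]; exact hψnz x)
  · intro s
    show 0 < deriv ⇑hφh s * deriv ⇑hψh s
    rw [hφcoe, hψcoe]
    exact hpos s
  · rcases key with k | k
    · left
      intro p hp
      show F p = (hφh (p.1 + p.2) + hψh (p.1 - p.2), hφh (p.1 + p.2) - hψh (p.1 - p.2))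
      rw [hφcoe, hψcoe]
      exact k p hp
    · right
      intro p hp
      show F p = (hφh (p.1 - p.2) + hψh (p.1 + p.2), hφh (p.1 - p.2) - hψh (p.1 + p.2))
      rw [hφcoe, hψcoe]
      exact k p hp
  · rintro ⟨f, g⟩ ⟨hsm, hpos', hform⟩
    have haxval : ∀ x : ℝ, F (x, 0) = (f x + g x, f x - g x) := by
      intro x
      rcases hform with h | h
      · have := h (x, 0) (hax x); simpa using this
      · have := h (x, 0) (hax x); simpa using this
    have haxval2 : ∀ x : ℝ, F (x, 0) = (φ x + ψ x, φ x - ψ x) := by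
      intro x
      rcases key with h | h
      · have := h (x, 0) (hax x); simpa using this
      · have := h (x, 0) (hax x); simpa using this
    have hfφ : ∀ x, f x = hφh x := by
      intro x
      have h := (haxval x).symm.trans (haxval2 x)
      rw [Prod.ext_iff] at h
      obtain ⟨h1, h2⟩ := h
      dsimp only at h1 h2
      rw [hφcoe]
      linarith
    have hgψ : ∀ x, g x = hψh x := by
      intro x
      have h := (haxval x).symm.trans (haxval2 x)
      rw [Prod.ext_iff] at h
      obtain ⟨h1, h2⟩ := h
      dsimp only at h1 h2
      rw [hψcoe]
      linarith
    have e1 : f = hφh := Homeomorph.ext hfφ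
    have e2 : g = hψh := Homeomorph.ext hgψ
    rw [Prod.ext_iff]
    exact ⟨e1, e2⟩
end

section
/- The map F : ℝ²₁ → ℝ²₁ given in null coordinates by (u, v) ↦ (u³, v³) (i.e., F(x,t) = ½((x+t)³+(x−t)³, (x+t)³−(x−t)³)) is a C^∞ causal automorphism of two-dimensional Minkowski spacetime whose inverse is not differentiable at the origin; hence F is not a conformal diffeomorphism. -/
private lemma cube_sm : StrictMono (fun s : ℝ => s ^ 3) :=
  Odd.strictMono_pow ⟨1, by norm_num⟩

private lemma cube_surj_nn (y : ℝ) (h : 0 ≤ y) : ∃ a : ℝ, a ^ 3 = y := by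
  refine ⟨y ^ ((1:ℝ)/3), ?_⟩
  have : (y ^ ((1:ℝ)/3)) ^ (3:ℕ) = y ^ (((1:ℝ)/3) * 3) := by
    rw [← Real.rpow_natCast (y ^ ((1:ℝ)/3)) 3, ← Real.rpow_mul h]
    norm_num
  simpa using this.trans (by norm_num)

private lemma cube_surj : Function.Surjective (fun s : ℝ => s ^ 3) := by
  intro y
  rcases le_or_gt 0 y with h | h
  · exact cube_surj_nn y h
  · obtain ⟨a, ha⟩ := cube_surj_nn (-y) (by linarith)
    exact ⟨-a, by simp only []; nlinarith [ha]⟩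

private lemma cube_inj : Function.Injective (fun s : ℝ => s ^ 3) := cube_sm.injective

private lemma cube_le_iff (a b : ℝ) : a ^ 3 ≤ b ^ 3 ↔ a ≤ b := cube_sm.le_iff_le


private lemma minkRel_iff (p q : ℝ × ℝ) :
    MinkRel p q ↔ p.1 + p.2 ≤ q.1 + q.2 ∧ q.1 - q.2 ≤ p.1 - p.2 := by
  unfold MinkRel
  rw [abs_le]
  constructor
  · rintro ⟨h1, h2⟩; constructor <;> linarith
  · rintro ⟨h1, h2⟩; constructor <;> linarith


/-- The map `F` given in null coordinates by `(u,v) ↦ (u³, v³)`, i.e.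
`F(x,t) = ½((x+t)³+(x−t)³, (x+t)³−(x−t)³)`, is a `C^∞` causal automorphism of `ℝ²₁` whose
inverse fails to be differentiable at the origin; hence `F` is not a conformal
diffeomorphism (it is not even a smooth diffeomorphism). -/
theorem cube_null_map_causal_not_conformal
    (F : ℝ × ℝ → ℝ × ℝ)
    (hF : ∀ x t : ℝ,
      F (x, t) = (((x + t) ^ 3 + (x - t) ^ 3) / 2, ((x + t) ^ 3 - (x - t) ^ 3) / 2)) :
    ContDiff ℝ (⊤ : ℕ∞) F ∧
    Function.Bijective F ∧
    (∀ p q : ℝ × ℝ, MinkRel p q ↔ MinkRel (F p) (F q)) ∧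
    (∀ G : ℝ × ℝ → ℝ × ℝ, Function.LeftInverse G F → Function.RightInverse G F →
      ¬ DifferentiableAt ℝ G (0, 0)) ∧
    ¬ ∃ G : ℝ × ℝ → ℝ × ℝ, Function.LeftInverse G F ∧ Function.RightInverse G F ∧
        ContDiff ℝ (⊤ : ℕ∞) G := by
  have hFp : ∀ p : ℝ × ℝ, F p =
      (((p.1 + p.2) ^ 3 + (p.1 - p.2) ^ 3) / 2, ((p.1 + p.2) ^ 3 - (p.1 - p.2) ^ 3) / 2) :=
    fun p => hF p.1 p.2
  -- smoothness
  have hsmooth : ContDiff ℝ (⊤ : ℕ∞) F := by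
    have hFeq : F = fun p : ℝ × ℝ =>
        (((p.1 + p.2) ^ 3 + (p.1 - p.2) ^ 3) / 2, ((p.1 + p.2) ^ 3 - (p.1 - p.2) ^ 3) / 2) :=
      funext hFp
    rw [hFeq]
    exact ((((contDiff_fst.add contDiff_snd).pow 3).add
        ((contDiff_fst.sub contDiff_snd).pow 3)).div_const 2).prodMk
      ((((contDiff_fst.add contDiff_snd).pow 3).sub
        ((contDiff_fst.sub contDiff_snd).pow 3)).div_const 2)
  -- injectivity
  have hinj : Function.Injective F := by
    intro p q h
    rw [hFp p, hFp q, Prod.mk.injEq] at h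
    obtain ⟨h1, h2⟩ := h
    have hu : (p.1 + p.2) ^ 3 = (q.1 + q.2) ^ 3 := by linarith
    have hv : (p.1 - p.2) ^ 3 = (q.1 - q.2) ^ 3 := by linarith
    have hu' := cube_inj hu
    have hv' := cube_inj hv
    have : p.1 = q.1 := by linarith
    have : p.2 = q.2 := by linarith
    exact Prod.ext ‹p.1 = q.1› ‹p.2 = q.2›
  -- surjectivity
  have hsurj : Function.Surjective F := by
    rintro ⟨X, T⟩
    obtain ⟨a, ha⟩ := cube_surj (X + T)
    obtain ⟨b, hb⟩ := cube_surj (X - T)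
    simp only [] at ha hb
    refine ⟨((a + b) / 2, (a - b) / 2), ?_⟩
    rw [hF]
    have e1 : (a + b) / 2 + (a - b) / 2 = a := by ring
    have e2 : (a + b) / 2 - (a - b) / 2 = b := by ring
    rw [e1, e2, ha, hb, Prod.mk.injEq]
    constructor <;> ring
  -- causality
  have hcausal : ∀ p q : ℝ × ℝ, MinkRel p q ↔ MinkRel (F p) (F q) := by
    intro p q
    rw [minkRel_iff, minkRel_iff, hFp p, hFp q]
    simp only []
    constructor
    · rintro ⟨h1, h2⟩
      have := (cube_le_iff (p.1 + p.2) (q.1 + q.2)).2 h1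
      have := (cube_le_iff (q.1 - q.2) (p.1 - p.2)).2 h2
      constructor <;> linarith
    · rintro ⟨h1, h2⟩
      have hA : (p.1 + p.2) ^ 3 ≤ (q.1 + q.2) ^ 3 := by linarith
      have hB : (q.1 - q.2) ^ 3 ≤ (p.1 - p.2) ^ 3 := by linarith
      exact ⟨(cube_le_iff _ _).1 hA, (cube_le_iff _ _).1 hB⟩
  -- inverse not differentiable at origin
  have hnotdiff : ∀ G : ℝ × ℝ → ℝ × ℝ, Function.LeftInverse G F →
      Function.RightInverse G F → ¬ DifferentiableAt ℝ G (0, 0) := by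
    intro G hGF _ hdiff
    -- the curve s ↦ (s^3, 0)
    have hk : HasDerivAt (fun s : ℝ => ((s ^ 3 : ℝ), (0:ℝ))) ((0:ℝ), (0:ℝ)) 0 := by
      have h1 : HasDerivAt (fun s : ℝ => s ^ 3) (3 * 0 ^ 2) 0 := by
        simpa using (hasDerivAt_pow 3 (0:ℝ))
      have h2 : HasDerivAt (fun _ : ℝ => (0:ℝ)) 0 0 := hasDerivAt_const 0 0
      simpa using h1.prodMk h2
    have hF0 : F (0, 0) = (0, 0) := by rw [hF]; norm_num
    obtain ⟨φ, hφ⟩ := hdiff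
    have hcomp : HasFDerivAt (fun s : ℝ => G (s ^ 3, 0))
        (φ.comp ((1 : ℝ →L[ℝ] ℝ).smulRight ((0:ℝ), (0:ℝ)))) 0 := by
      have : HasFDerivAt (fun s : ℝ => ((s ^ 3 : ℝ), (0:ℝ)))
          ((1 : ℝ →L[ℝ] ℝ).smulRight ((0:ℝ), (0:ℝ))) 0 := hk.hasFDerivAt
      have hφ' : HasFDerivAt G φ ((0:ℝ) ^ 3, (0:ℝ)) := by
        rw [show (((0:ℝ) ^ 3, (0:ℝ)) : ℝ × ℝ) = ((0:ℝ), (0:ℝ)) by norm_num]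
        exact hφ
      exact HasFDerivAt.comp (f := fun s : ℝ => ((s ^ 3 : ℝ), (0:ℝ))) 0 hφ' this
    -- first component
    have hfst : HasDerivAt (fun s : ℝ => (G (s ^ 3, 0)).1)
        ((φ.comp ((1 : ℝ →L[ℝ] ℝ).smulRight ((0:ℝ), (0:ℝ)))) 1).1 0 := by
      have := (ContinuousLinearMap.fst ℝ ℝ ℝ).hasFDerivAt.comp 0 hcomp
      exact this.hasDerivAt
    have hid : (fun s : ℝ => (G (s ^ 3, 0)).1) = fun s => s := by
      funext s
      have : F (s, 0) = (s ^ 3, 0) := by rw [hF, Prod.mk.injEq]; constructor <;> ring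
      rw [← this, hGF (s, 0)]
    rw [hid] at hfst
    have hone : HasDerivAt (fun s : ℝ => s) 1 (0:ℝ) := hasDerivAt_id 0
    have := hfst.unique hone
    simp [← Prod.zero_eq_mk] at this
  refine ⟨hsmooth, ⟨hinj, hsurj⟩, hcausal, hnotdiff, ?_⟩
  rintro ⟨G, hL, hR, hG⟩
  exact hnotdiff G hL hR ((hG.differentiable (by simp)).differentiableAt)
end
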